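/- arXiv:1507.08654 — 3 statements merged into one kernel-verified Lean document; each statement's English description precedes it below -/
import Mathlib

section
/- The coefficient sequences of the strong alliance polynomials of path, cycle and complete graphs are unimodal: for every n ≥ 2 the sequence (a_k(P_n))_{k=0}^{n} is unimodal, for every n ≥ 3 the sequence (a_k(C_n))_{k=0}^{n} is unimodal, and for every n ≥ 1 the sequence (a_k(K_n))_{k=0}^{n} is unimodal. -/
open SimpleGraph Polynomial Finset

/-- `δ_S(v)`: the number of neighbors of `v` lying in the set `S`. -/
noncomputable def degIn {V : Type*} (G : SimpleGraph V) (S : Finset V) (v : V) : ℕ :=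
  ((S : Set V) ∩ G.neighborSet v).ncard

/-- `δ(v)`: the degree of `v` in `G`. -/
noncomputable def degOf {V : Type*} (G : SimpleGraph V) (v : V) : ℕ :=
  (G.neighborSet v).ncard

/-- `S` is a strong defensive alliance in `G`: `S` is nonempty and every `v ∈ S`
satisfies `2·δ_S(v) ≥ δ(v)`. -/
def IsStrongAlliance {V : Type*} (G : SimpleGraph V) (S : Finset V) : Prop :=
  S.Nonempty ∧ ∀ v ∈ S, degOf G v ≤ 2 * degIn G S v

/-- The alliances counted by the strong alliance polynomial: strong defensive alliances
whose induced subgraph is connected. -/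
def IsCountedAlliance {V : Type*} (G : SimpleGraph V) (S : Finset V) : Prop :=
  IsStrongAlliance G S ∧ (G.induce (S : Set V)).Connected

/-- `a_k(G)`: the number of strong defensive alliances of cardinality `k` in `G`
whose induced subgraph is connected. -/
noncomputable def aCoeff {V : Type*} (G : SimpleGraph V) (k : ℕ) : ℕ :=
  {S : Finset V | S.card = k ∧ IsCountedAlliance G S}.ncard

/-- The strong alliance polynomial `a(G;x) = Σ_k a_k(G) x^k`. -/
noncomputable def alliancePoly {V : Type*} [Fintype V] (G : SimpleGraph V) : Polynomial ℤ :=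
  ∑ k ∈ Finset.range (Fintype.card V + 1), Polynomial.C (aCoeff G k : ℤ) * Polynomial.X ^ k

/-- A sequence `f 0, …, f n` is unimodal: it increases up to some mode `k ≤ n` and
decreases afterwards. -/
def UnimodalOn (f : ℕ → ℕ) (n : ℕ) : Prop :=
  ∃ k ≤ n, (∀ i j, i ≤ j → j ≤ k → f i ≤ f j) ∧ (∀ i j, k ≤ i → i ≤ j → j ≤ n → f j ≤ f i)

-- general: a_0 = 0
lemma aCoeff_zero {V : Type*} (G : SimpleGraph V) : aCoeff G 0 = 0 := by
  have : {S : Finset V | S.card = 0 ∧ IsCountedAlliance G S} = ∅ := by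
    ext S
    simp only [Set.mem_setOf_eq, Set.mem_empty_iff_false, iff_false, not_and]
    intro hc hC
    exact absurd (Finset.card_eq_zero.mp hc) (Finset.nonempty_iff_ne_empty.mp hC.1.1)
  rw [aCoeff, this, Set.ncard_empty]

-- degIn of a singleton at its element is 0
lemma degIn_singleton {V : Type*} (G : SimpleGraph V) (v : V) : degIn G {v} v = 0 := by
  have : ((({v} : Finset V) : Set V) ∩ G.neighborSet v) = ∅ := by
    ext w
    simp only [Finset.coe_singleton, Set.mem_inter_iff, Set.mem_singleton_iff,
      mem_neighborSet, Set.mem_empty_iff_false, iff_false, not_and]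
    rintro rfl
    exact fun h => G.irrefl h
  rw [degIn, this, Set.ncard_empty]

-- if every vertex has positive degree, a_1 = 0
lemma aCoeff_one {V : Type*} (G : SimpleGraph V) (h : ∀ v : V, 1 ≤ degOf G v) :
    aCoeff G 1 = 0 := by
  have : {S : Finset V | S.card = 1 ∧ IsCountedAlliance G S} = ∅ := by
    ext S
    simp only [Set.mem_setOf_eq, Set.mem_empty_iff_false, iff_false, not_and]
    intro hc hC
    obtain ⟨v, rfl⟩ := Finset.card_eq_one.mp hc
    have := hC.1.2 v (Finset.mem_singleton_self v)
    rw [degIn_singleton] at this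
    have := h v
    omega
  rw [aCoeff, this, Set.ncard_empty]

lemma degIn_pos {V : Type*} [Fintype V] (G : SimpleGraph V) (S : Finset V) (v : V)
    (w : V) (hw : w ∈ S) (hadj : G.Adj v w) : 1 ≤ degIn G S v := by
  rw [degIn, Nat.one_le_iff_ne_zero, Ne, Set.ncard_eq_zero (Set.toFinite _)]
  intro h
  exact absurd h (Set.nonempty_iff_ne_empty.mp ⟨w, by simpa using ⟨hw, hadj⟩⟩)

-- walk intermediate value lemma for path graphs
lemma path_walk_ivl {n : ℕ} (S : Set (Fin n)) :
    ∀ {x y : ↥S} (_ : ((pathGraph n).induce S).Walk x y) (c : Fin n),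
      (x : Fin n) ≤ c → c ≤ (y : Fin n) → c ∈ S := by
  intro x y W
  induction W with
  | nil =>
    intro c h1 h2
    have : c = _ := le_antisymm h2 h1
    rw [this]
    exact Subtype.coe_prop _
  | @cons u v w h p ih =>
    intro c h1 h2
    rcases eq_or_lt_of_le h1 with heq | hlt
    · rw [← heq]; exact Subtype.coe_prop _
    · apply ih c _ h2
      have hadj : (pathGraph n).Adj ↑u ↑v := h
      rw [pathGraph_adj] at hadj
      have := u.1.2
      have := v.1.2
      have hc : (u : Fin n).val < c.val := hlt
      rcases hadj with h' | h' <;> · simp only [Fin.le_def]; omega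

-- connected subsets of the path graph are intervals
lemma path_connected_interval {n : ℕ} (S : Finset (Fin n)) (hS : S.Nonempty)
    (hconn : ((pathGraph n).induce (S : Set (Fin n))).Connected) :
    S = Finset.Icc (S.min' hS) (S.max' hS) := by
  apply Finset.ext
  intro c
  simp only [Finset.mem_Icc]
  constructor
  · exact fun hc => ⟨S.min'_le c hc, S.le_max' c hc⟩
  · rintro ⟨h1, h2⟩
    have hmin : (S.min' hS : Fin n) ∈ (S : Set (Fin n)) := by simpa using S.min'_mem hS
    have hmax : (S.max' hS : Fin n) ∈ (S : Set (Fin n)) := by simpa using S.max'_mem hS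
    obtain ⟨W⟩ := hconn.preconnected ⟨_, hmin⟩ ⟨_, hmax⟩
    simpa using path_walk_ivl (S : Set (Fin n)) W c h1 h2

-- intervals of the path graph are connected
lemma path_icc_connected {n : ℕ} (a b : Fin n) (hab : a ≤ b) :
    ((pathGraph n).induce ((Finset.Icc a b : Finset (Fin n)) : Set (Fin n))).Connected := by
  have ha : a ∈ (Finset.Icc a b : Finset (Fin n)) := Finset.mem_Icc.mpr ⟨le_refl a, hab⟩
  have key : ∀ m : ℕ, ∀ v : Fin n, ∀ (hv : v ∈ Finset.Icc a b), v.val = a.val + m →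
      ((pathGraph n).induce ((Finset.Icc a b : Finset (Fin n)) : Set (Fin n))).Reachable
        ⟨a, by simpa using ha⟩ ⟨v, by simpa using hv⟩ := by
    intro m
    induction m with
    | zero =>
      intro v hv hval
      have : v = a := Fin.ext (by omega)
      subst this
      rfl
    | succ m ih =>
      intro v hv hval
      have hub := v.2
      have hmem := Finset.mem_Icc.mp hv
      have hu : (⟨v.val - 1, by omega⟩ : Fin n) ∈ Finset.Icc a b := by
        rw [Finset.mem_Icc]
        constructor
        · rw [Fin.le_def]
          show a.val ≤ v.val - 1
          have := (Finset.mem_Icc.mp hv).1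
          rw [Fin.le_def] at this
          omega
        · refine le_trans ?_ hmem.2
          rw [Fin.le_def]
          show v.val - 1 ≤ v.val
          omega
      have step0 : (pathGraph n).Adj (⟨v.val - 1, by omega⟩ : Fin n) v := by
        rw [pathGraph_adj]
        left
        show v.val - 1 + 1 = v.val
        omega
      have step : ((pathGraph n).induce ((Finset.Icc a b : Finset (Fin n)) : Set (Fin n))).Adj
          ⟨⟨v.val - 1, by omega⟩, by simpa using hu⟩ ⟨v, by simpa using hv⟩ := step0
      exact (ih ⟨v.val - 1, by omega⟩ hu (by show v.val - 1 = a.val + m; omega)).trans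
        step.reachable
  rw [connected_iff_exists_forall_reachable]
  refine ⟨⟨a, by simpa using ha⟩, ?_⟩
  rintro ⟨w, hw⟩
  have hw' : w ∈ Finset.Icc a b := by simpa using hw
  have : w.val = a.val + (w.val - a.val) := by
    have := (Finset.mem_Icc.mp hw').1
    rw [Fin.le_def] at this; omega
  exact key (w.val - a.val) w hw' this

lemma path_degOf_le_two {n : ℕ} (v : Fin n) : degOf (pathGraph n) v ≤ 2 := by
  have hv := v.2
  have hsub : (pathGraph n).neighborSet v ⊆
      {(⟨min (v.val + 1) (n - 1), by omega⟩ : Fin n), ⟨v.val - 1, by omega⟩} := by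
    intro w hw
    have hw' := (pathGraph_adj.mp hw)
    have hwlt := w.2
    rcases hw' with h | h
    · left; apply Fin.ext; show w.val = min (v.val+1) (n-1); omega
    · right; apply Fin.ext; show w.val = v.val - 1; omega
  calc degOf (pathGraph n) v ≤ ({_, _} : Set (Fin n)).ncard :=
        Set.ncard_le_ncard hsub (Set.toFinite _)
    _ ≤ 2 := by
        refine le_trans (Set.ncard_insert_le _ _) ?_
        simp [Set.ncard_singleton]

lemma path_degOf_pos {n : ℕ} (hn : 2 ≤ n) (v : Fin n) : 1 ≤ degOf (pathGraph n) v := by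
  have hv := v.2
  rw [degOf, Nat.one_le_iff_ne_zero, Ne, Set.ncard_eq_zero (Set.toFinite _),
    ← Set.not_nonempty_iff_eq_empty, not_not]
  by_cases h : v.val + 1 < n
  · exact ⟨⟨v.val + 1, h⟩, pathGraph_adj.mpr (Or.inl rfl)⟩
  · refine ⟨⟨v.val - 1, by omega⟩, pathGraph_adj.mpr (Or.inr ?_)⟩
    show v.val - 1 + 1 = v.val
    omega

lemma path_counted_iff {n : ℕ} (hn : 2 ≤ n) (S : Finset (Fin n)) :
    IsCountedAlliance (pathGraph n) S ↔ ∃ a b : Fin n, a < b ∧ S = Finset.Icc a b := by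
  constructor
  · rintro ⟨⟨hne, hall⟩, hconn⟩
    refine ⟨S.min' hne, S.max' hne, ?_, path_connected_interval S hne hconn⟩
    rcases lt_or_eq_of_le (S.min'_le _ (S.max'_mem hne)) with h | h
    · exact h
    · exfalso
      obtain ⟨v, hv⟩ : ∃ v, S = {v} := by
        refine ⟨S.max' hne, Finset.eq_singleton_iff_unique_mem.mpr ⟨S.max'_mem hne, ?_⟩⟩
        intro x hx
        exact le_antisymm (S.le_max' x hx) (h ▸ S.min'_le x hx)
      rw [hv] at hall
      have hthis := hall v (Finset.mem_singleton_self v)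
      have h0 : degIn (pathGraph n) {v} v = 0 := by
        have he : ((({v} : Finset (Fin n)) : Set (Fin n)) ∩
            (pathGraph n).neighborSet v) = ∅ := by
          ext w
          simp only [Finset.coe_singleton, Set.mem_inter_iff, Set.mem_singleton_iff,
            mem_neighborSet, Set.mem_empty_iff_false, iff_false, not_and]
          rintro rfl
          exact fun hadj => (pathGraph n).irrefl hadj
        rw [degIn, he, Set.ncard_empty]
      rw [h0] at hthis
      have := path_degOf_pos hn v
      omega
  · rintro ⟨a, b, hab, rfl⟩
    have hne : (Finset.Icc a b).Nonempty := ⟨a, Finset.mem_Icc.mpr ⟨le_refl a, le_of_lt hab⟩⟩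
    refine ⟨⟨hne, ?_⟩, path_icc_connected a b (le_of_lt hab)⟩
    intro v hv
    have hmem := Finset.mem_Icc.mp hv
    have hvlt := v.2
    have hblt := b.2
    have hab' : a.val < b.val := hab
    have hav : a.val ≤ v.val := hmem.1
    have hvb : v.val ≤ b.val := hmem.2
    have hdegin : 1 ≤ degIn (pathGraph n) (Finset.Icc a b) v := by
      by_cases h : v.val < b.val
      · refine degIn_pos _ _ _ ⟨v.val + 1, by omega⟩ ?_ (pathGraph_adj.mpr (Or.inl rfl))
        rw [Finset.mem_Icc]
        exact ⟨le_trans hmem.1 (by rw [Fin.le_def]; show v.val ≤ v.val + 1; omega),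
          by rw [Fin.le_def]; show v.val + 1 ≤ b.val; omega⟩
      · refine degIn_pos _ _ _ ⟨v.val - 1, by omega⟩ ?_
          (pathGraph_adj.mpr (Or.inr (by show v.val - 1 + 1 = v.val; omega)))
        rw [Finset.mem_Icc]
        constructor
        · rw [Fin.le_def]; show a.val ≤ v.val - 1; omega
        · rw [Fin.le_def]; show v.val - 1 ≤ b.val; omega
    calc degOf (pathGraph n) v ≤ 2 := path_degOf_le_two v
      _ ≤ 2 * degIn (pathGraph n) (Finset.Icc a b) v := by omega

lemma icc_max' {n : ℕ} (a b : Fin n) (hab : a ≤ b) :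
    (Finset.Icc a b).max' ⟨a, Finset.mem_Icc.mpr ⟨le_refl a, hab⟩⟩ = b := by
  apply le_antisymm
  · exact Finset.max'_le _ _ _ (fun x hx => (Finset.mem_Icc.mp hx).2)
  · exact Finset.le_max' _ _ (Finset.mem_Icc.mpr ⟨hab, le_refl b⟩)

lemma icc_erase_top {n : ℕ} (a b : Fin n) (hab : a < b) :
    (Finset.Icc a b).erase b = Finset.Icc a ⟨b.val - 1, by omega⟩ := by
  ext x
  have hb := b.2
  simp only [Finset.mem_erase, Finset.mem_Icc, Fin.le_def, Fin.lt_def, Ne, Fin.ext_iff]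
  show (¬x.val = b.val ∧ _ ∧ _) ↔ (_ ∧ x.val ≤ b.val - 1)
  omega

lemma path_step {n : ℕ} (hn : 2 ≤ n) {k : ℕ} (hk : 2 ≤ k) :
    aCoeff (pathGraph n) (k + 1) ≤ aCoeff (pathGraph n) k := by
  classical
  rw [aCoeff, aCoeff]
  apply Set.ncard_le_ncard_of_injOn
    (fun S => if h : S.Nonempty then S.erase (S.max' h) else S)
  · rintro S ⟨hcard, hcount⟩
    obtain ⟨a, b, hab, rfl⟩ := (path_counted_iff hn S).mp hcount
    have hne : (Finset.Icc a b).Nonempty := ⟨a, Finset.mem_Icc.mpr ⟨le_refl a, le_of_lt hab⟩⟩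
    have hmax : (Finset.Icc a b).max' hne = b := icc_max' a b (le_of_lt hab)
    have hb := b.2
    have hcard' : b.val + 1 - a.val = k + 1 := by rwa [Fin.card_Icc] at hcard
    have habv : a.val < b.val := hab
    have hb' : (⟨b.val - 1, by omega⟩ : Fin n) = ⟨b.val - 1, by omega⟩ := rfl
    simp only [Set.mem_setOf_eq]
    rw [dif_pos hne, hmax, icc_erase_top a b hab]
    constructor
    · rw [Fin.card_Icc]
      show b.val - 1 + 1 - a.val = k
      omega
    · rw [path_counted_iff hn]
      exact ⟨a, ⟨b.val - 1, by omega⟩, by rw [Fin.lt_def]; show a.val < b.val - 1; omega, rfl⟩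
  · rintro S1 ⟨hcard1, hcount1⟩ S2 ⟨hcard2, hcount2⟩ heq
    obtain ⟨a1, b1, hab1, rfl⟩ := (path_counted_iff hn S1).mp hcount1
    obtain ⟨a2, b2, hab2, rfl⟩ := (path_counted_iff hn S2).mp hcount2
    have hne1 : (Finset.Icc a1 b1).Nonempty := ⟨a1, Finset.mem_Icc.mpr ⟨le_refl _, le_of_lt hab1⟩⟩
    have hne2 : (Finset.Icc a2 b2).Nonempty := ⟨a2, Finset.mem_Icc.mpr ⟨le_refl _, le_of_lt hab2⟩⟩
    have hb1 := b1.2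
    have hb2 := b2.2
    have hc1 : b1.val + 1 - a1.val = k + 1 := by rwa [Fin.card_Icc] at hcard1
    have hc2 : b2.val + 1 - a2.val = k + 1 := by rwa [Fin.card_Icc] at hcard2
    have hab1' : a1.val < b1.val := hab1
    have hab2' : a2.val < b2.val := hab2
    simp only [dif_pos hne1, dif_pos hne2, icc_max' a1 b1 (le_of_lt hab1),
      icc_max' a2 b2 (le_of_lt hab2)] at heq
    rw [icc_erase_top a1 b1 hab1, icc_erase_top a2 b2 hab2] at heq
    have hmem : a1 ∈ Finset.Icc a2 (⟨b2.val - 1, by omega⟩ : Fin n) := by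
      rw [← heq]
      exact Finset.mem_Icc.mpr ⟨le_refl _, by rw [Fin.le_def]; show a1.val ≤ b1.val - 1; omega⟩
    have hmem2 : a2 ∈ Finset.Icc a1 (⟨b1.val - 1, by omega⟩ : Fin n) := by
      rw [heq]
      exact Finset.mem_Icc.mpr ⟨le_refl _, by rw [Fin.le_def]; show a2.val ≤ b2.val - 1; omega⟩
    have ha : a1 = a2 :=
      le_antisymm (Finset.mem_Icc.mp hmem2).1 (Finset.mem_Icc.mp hmem).1
    subst ha
    have hbv : b1 = b2 := Fin.ext (by omega)
    rw [hbv]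

lemma path_unimodal {n : ℕ} (hn : 2 ≤ n) : UnimodalOn (aCoeff (pathGraph n)) n := by
  refine ⟨2, hn, ?_, ?_⟩
  · intro i j hij hj2
    rcases Nat.lt_or_ge i 2 with hi | hi
    · interval_cases i
      · rw [aCoeff_zero]; exact Nat.zero_le _
      · rw [aCoeff_one _ (path_degOf_pos hn)]; exact Nat.zero_le _
    · have hieq : i = j := by omega
      rw [hieq]
  · intro i j h2i hij hjn
    clear hjn
    induction j, hij using Nat.le_induction with
    | base => exact le_refl _
    | succ j hj ih => exact le_trans (path_step hn (le_trans h2i hj)) ih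


lemma top_degOf {n : ℕ} (v : Fin n) : degOf (⊤ : SimpleGraph (Fin n)) v = n - 1 := by
  classical
  have : (⊤ : SimpleGraph (Fin n)).neighborSet v = ↑(Finset.univ.erase v) := by
    ext w
    simp [mem_neighborSet, top_adj, ne_comm]
  rw [degOf, this, Set.ncard_coe_finset, Finset.card_erase_of_mem (Finset.mem_univ v),
    Finset.card_univ, Fintype.card_fin]

lemma top_degIn {n : ℕ} (S : Finset (Fin n)) (v : Fin n) :
    degIn (⊤ : SimpleGraph (Fin n)) S v = (S.erase v).card := by
  classical
  have : ((S : Set (Fin n)) ∩ (⊤ : SimpleGraph (Fin n)).neighborSet v) = ↑(S.erase v) := by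
    ext w
    simp [mem_neighborSet, top_adj, and_comm, ne_comm]
  rw [degIn, this, Set.ncard_coe_finset]

lemma top_counted_iff {n : ℕ} (hn : 1 ≤ n) (S : Finset (Fin n)) :
    IsCountedAlliance (⊤ : SimpleGraph (Fin n)) S ↔ S.Nonempty ∧ n + 1 ≤ 2 * S.card := by
  classical
  have hconn : S.Nonempty → ((⊤ : SimpleGraph (Fin n)).induce (S : Set (Fin n))).Connected := by
    rintro ⟨v, hv⟩
    have : (⊤ : SimpleGraph (Fin n)).induce (S : Set (Fin n)) = (⊤ : SimpleGraph _) := by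
      ext x y
      constructor
      · exact fun h => Subtype.coe_ne_coe.mp h
      · exact fun h => Subtype.coe_ne_coe.mpr h
    rw [this]
    have : Nonempty ((S : Set (Fin n)) : Type _) := ⟨⟨v, by simpa using hv⟩⟩
    exact connected_top
  constructor
  · rintro ⟨⟨hne, hall⟩, _⟩
    obtain ⟨v, hv⟩ := hne
    have := hall v hv
    rw [top_degOf, top_degIn, Finset.card_erase_of_mem hv] at this
    have hpos : 1 ≤ S.card := Finset.card_pos.mpr ⟨v, hv⟩
    exact ⟨⟨v, hv⟩, by omega⟩
  · rintro ⟨hne, hcard⟩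
    refine ⟨⟨hne, ?_⟩, hconn hne⟩
    intro v hv
    rw [top_degOf, top_degIn, Finset.card_erase_of_mem hv]
    have hpos : 1 ≤ S.card := Finset.card_pos.mpr ⟨v, hv⟩
    omega

lemma top_aCoeff {n : ℕ} (hn : 1 ≤ n) (k : ℕ) :
    aCoeff (⊤ : SimpleGraph (Fin n)) k = if n + 1 ≤ 2 * k then n.choose k else 0 := by
  classical
  rw [aCoeff]
  split_ifs with h
  · have : {S : Finset (Fin n) | S.card = k ∧ IsCountedAlliance (⊤ : SimpleGraph (Fin n)) S}
        = ↑(Finset.powersetCard k (Finset.univ : Finset (Fin n))) := by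
      ext S
      simp only [Set.mem_setOf_eq, Finset.mem_coe, Finset.mem_powersetCard_univ]
      constructor
      · exact fun h => h.1
      · intro hc
        refine ⟨hc, (top_counted_iff hn S).mpr ⟨Finset.card_pos.mp (by omega), by omega⟩⟩
    rw [this, Set.ncard_coe_finset, Finset.card_powersetCard, Finset.card_univ,
      Fintype.card_fin]
  · have : {S : Finset (Fin n) | S.card = k ∧ IsCountedAlliance (⊤ : SimpleGraph (Fin n)) S}
        = ∅ := by
      ext S
      simp only [Set.mem_setOf_eq, Set.mem_empty_iff_false, iff_false, not_and]
      intro hc hcount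
      have := ((top_counted_iff hn S).mp hcount).2
      omega
    rw [this, Set.ncard_empty]

lemma choose_mono_le_half {n : ℕ} : ∀ b, b ≤ n / 2 → ∀ a, a ≤ b → n.choose a ≤ n.choose b := by
  intro b
  induction b with
  | zero =>
    intro _ a ha
    have : a = 0 := by omega
    rw [this]
  | succ b ih =>
    intro hb a ha
    rcases Nat.lt_or_ge a (b + 1) with h | h
    · exact le_trans (ih (by omega) a (by omega))
        (Nat.choose_le_succ_of_lt_half_left (by omega))
    · have : a = b + 1 := by omega
      rw [this]

lemma top_unimodal {n : ℕ} (hn : 1 ≤ n) : UnimodalOn (aCoeff (⊤ : SimpleGraph (Fin n))) n := by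
  refine ⟨n / 2 + 1, by omega, ?_, ?_⟩
  · intro i j hij hjm
    rcases Nat.lt_or_ge (2 * i) (n + 1) with hi | hi
    · rw [top_aCoeff hn i, if_neg (by omega)]
      exact Nat.zero_le _
    · have : i = j := by omega
      rw [this]
  · intro i j hmi hij hjn
    have hin : i ≤ n := le_trans hij hjn
    rw [top_aCoeff hn i, top_aCoeff hn j, if_pos (by omega), if_pos (by omega)]
    have e1 : n.choose (n - j) = n.choose j := Nat.choose_symm hjn
    have e2 : n.choose (n - i) = n.choose i := Nat.choose_symm hin
    rw [← e1, ← e2]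
    exact choose_mono_le_half (n - i) (by omega) (n - j) (by omega)

lemma fin_sub_val_eq_one {m : ℕ} (u v : Fin (m + 3)) :
    (u - v).val = 1 ↔ (u.val = v.val + 1 ∨ (v.val = m + 2 ∧ u.val = 0)) := by
  have hu := u.2
  have hv := v.2
  rw [Fin.sub_def]
  show (m + 3 - v.val + u.val) % (m + 3) = 1 ↔ _
  rcases Nat.lt_or_ge (m + 3 - v.val + u.val) (m + 3) with h | h
  · rw [Nat.mod_eq_of_lt h]; omega
  · have h2 : (m + 3 - v.val + u.val) % (m + 3)
        = m + 3 - v.val + u.val - (m + 3) := by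
      rw [Nat.mod_eq_sub_mod h, Nat.mod_eq_of_lt (by omega)]
    rw [h2]; omega

lemma fin_sub_one_val {m : ℕ} (w : Fin (m + 3)) (hw : w.val ≠ 0) :
    (w - 1).val = w.val - 1 := by
  have h3 := w.2
  rw [Fin.sub_def]
  show (m + 3 - (1 : Fin (m+3)).val + w.val) % (m + 3) = w.val - 1
  rw [Fin.val_one]
  rw [Nat.mod_eq_sub_mod (by omega), Nat.mod_eq_of_lt (by omega)]
  omega

lemma fin_neg_one_val {m : ℕ} : ((-1 : Fin (m + 3))).val = m + 2 := by
  have : (-1 : Fin (m+3)) = 0 - 1 := by rw [zero_sub]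
  rw [this, Fin.sub_def]
  show (m + 3 - (1 : Fin (m+3)).val + (0 : Fin (m+3)).val) % (m + 3) = m + 2
  rw [Fin.val_one, Fin.val_zero]
  rw [Nat.mod_eq_of_lt (by omega)]
  omega

lemma cycle_adj_vals {m : ℕ} (u v : Fin (m + 3)) :
    (cycleGraph (m + 3)).Adj u v ↔
      (u.val = v.val + 1 ∨ v.val = u.val + 1 ∨
       (v.val = m + 2 ∧ u.val = 0) ∨ (u.val = m + 2 ∧ v.val = 0)) := by
  rw [cycleGraph_adj', fin_sub_val_eq_one, fin_sub_val_eq_one]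
  tauto

lemma cycle_degOf {m : ℕ} (v : Fin (m + 3)) : degOf (cycleGraph (m + 3)) v = 2 := by
  rw [degOf]
  have hs : (cycleGraph (m + 3)).neighborSet v = {v - 1, v + 1} := cycleGraph_neighborSet
  rw [hs]
  rw [Set.ncard_pair]
  intro h
  have h2 : v - 1 - v = v + 1 - v := by rw [h]
  rw [sub_sub_cancel_left, add_sub_cancel_left] at h2
  have h3 := congrArg Fin.val h2
  rw [fin_neg_one_val, Fin.val_one] at h3
  omega

lemma cycle_adj_add {m : ℕ} (c u v : Fin (m + 3)) :
    (cycleGraph (m + 3)).Adj (u + c) (v + c) ↔ (cycleGraph (m + 3)).Adj u v := by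
  rw [cycleGraph_adj', cycleGraph_adj', add_sub_add_right_eq_sub, add_sub_add_right_eq_sub]

lemma cycle_degIn_add {m : ℕ} (c : Fin (m + 3)) (S : Finset (Fin (m + 3))) (v : Fin (m + 3)) :
    degIn (cycleGraph (m + 3)) (S.image (· + c)) (v + c) = degIn (cycleGraph (m + 3)) S v := by
  rw [degIn, degIn]
  have key : ((S.image (· + c) : Finset (Fin (m+3))) : Set (Fin (m+3)))
      ∩ (cycleGraph (m+3)).neighborSet (v + c)
      = (· + c) '' (((S : Set (Fin (m+3)))) ∩ (cycleGraph (m+3)).neighborSet v) := by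
    ext x
    simp only [Finset.coe_image, Set.mem_inter_iff, Set.mem_image, Finset.mem_coe,
      mem_neighborSet]
    constructor
    · rintro ⟨⟨y, hy, rfl⟩, hadj⟩
      exact ⟨y, ⟨hy, (cycle_adj_add c v y).mp hadj⟩, rfl⟩
    · rintro ⟨y, ⟨hy, hadj⟩, rfl⟩
      exact ⟨⟨y, hy, rfl⟩, (cycle_adj_add c v y).mpr hadj⟩
  rw [key, Set.ncard_image_of_injective _ (add_left_injective c)]

lemma cycle_connected_image {m : ℕ} (c : Fin (m + 3)) (S : Finset (Fin (m + 3))) :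
    ((cycleGraph (m+3)).induce ((S.image (· + c) : Finset (Fin (m+3))) : Set (Fin (m+3)))).Connected
      ↔ ((cycleGraph (m+3)).induce (S : Set (Fin (m+3)))).Connected := by
  symm
  apply SimpleGraph.Iso.connected_iff
  refine ⟨Equiv.subtypeEquiv (Equiv.addRight c) ?_, ?_⟩
  · intro a
    simp only [Set.mem_setOf_eq, Finset.mem_coe, Equiv.coe_addRight, Finset.coe_image,
      Set.mem_image]
    constructor
    · exact fun h => ⟨a, h, rfl⟩
    · rintro ⟨y, hy, heq⟩
      have : y = a := add_left_injective c heq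
      rwa [← this]
  · intro a b
    exact cycle_adj_add c a b

lemma cycle_counted_image {m : ℕ} (c : Fin (m + 3)) (S : Finset (Fin (m + 3))) :
    IsCountedAlliance (cycleGraph (m+3)) (S.image (· + c))
      ↔ IsCountedAlliance (cycleGraph (m+3)) S := by
  constructor
  · rintro ⟨⟨hne, hall⟩, hconn⟩
    refine ⟨⟨?_, ?_⟩, (cycle_connected_image c S).mp hconn⟩
    · obtain ⟨x, hx⟩ := hne
      obtain ⟨y, hy, _⟩ := Finset.mem_image.mp hx
      exact ⟨y, hy⟩
    · intro v hv
      have := hall (v + c) (Finset.mem_image.mpr ⟨v, hv, rfl⟩)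
      rw [cycle_degOf, cycle_degIn_add] at this
      rw [cycle_degOf]
      exact this
  · rintro ⟨⟨hne, hall⟩, hconn⟩
    refine ⟨⟨hne.image _, ?_⟩, (cycle_connected_image c S).mpr hconn⟩
    intro v hv
    obtain ⟨y, hy, rfl⟩ := Finset.mem_image.mp hv
    have := hall y hy
    rw [cycle_degOf] at this
    rw [cycle_degOf, cycle_degIn_add]
    exact this

/-- arcs in the cycle graph -/
def arc (m k : ℕ) (a : Fin (m + 3)) : Finset (Fin (m + 3)) :=
  (Finset.Icc (0 : Fin (m + 3)) ⟨min (k - 1) (m + 2), by omega⟩).image (· + a)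

lemma fin_sub_val_of_le {m : ℕ} (x a : Fin (m + 3)) (h : a.val ≤ x.val) :
    (x - a).val = x.val - a.val := by
  have hx := x.2
  have ha := a.2
  rw [Fin.sub_def]
  show (m + 3 - a.val + x.val) % (m + 3) = x.val - a.val
  rw [Nat.mod_eq_sub_mod (by omega), Nat.mod_eq_of_lt (by omega)]
  omega

lemma fin_add_val {m : ℕ} (x y : Fin (m + 3)) (h : x.val + y.val < m + 3) :
    (x + y).val = x.val + y.val := by
  rw [Fin.add_def]
  show (x.val + y.val) % (m + 3) = x.val + y.val
  exact Nat.mod_eq_of_lt h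

lemma cycle_induce_eq_path {m : ℕ} (S : Finset (Fin (m + 3)))
    (hS : ∀ x ∈ S, x.val < m + 2) :
    (cycleGraph (m + 3)).induce (S : Set (Fin (m + 3)))
      = (pathGraph (m + 3)).induce (S : Set (Fin (m + 3))) := by
  ext ⟨x, hx⟩ ⟨y, hy⟩
  have hx' : x.val < m + 2 := hS x (by simpa using hx)
  have hy' : y.val < m + 2 := hS y (by simpa using hy)
  show (cycleGraph (m + 3)).Adj x y ↔ (pathGraph (m + 3)).Adj x y
  rw [cycle_adj_vals, pathGraph_adj]
  omega

section arcs
variable {m k : ℕ} (hk2 : 2 ≤ k) (hkn : k ≤ m + 2)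

lemma min_eq_arc (hkn : k ≤ m + 2) : min (k - 1) (m + 2) = k - 1 := by omega

include hkn in
lemma mem_arc {a x : Fin (m + 3)} : x ∈ arc m k a ↔ (x - a).val ≤ k - 1 := by
  rw [arc]
  simp only [Finset.mem_image, Finset.mem_Icc]
  constructor
  · rintro ⟨y, ⟨-, hy2⟩, rfl⟩
    rw [add_sub_cancel_right]
    rw [Fin.le_def] at hy2
    calc y.val ≤ min (k-1) (m+2) := hy2
      _ ≤ k - 1 := by omega
  · intro h
    refine ⟨x - a, ⟨Fin.zero_le _, ?_⟩, by rw [sub_add_cancel]⟩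
    rw [Fin.le_def]
    show (x - a).val ≤ min (k - 1) (m + 2)
    omega

include hk2 hkn in
lemma arc_card (a : Fin (m + 3)) : (arc m k a).card = k := by
  rw [arc, Finset.card_image_of_injective _ (add_left_injective a), Fin.card_Icc]
  show min (k-1) (m+2) + 1 - (0 : Fin (m+3)).val = k
  rw [Fin.val_zero]
  omega

include hk2 hkn in
lemma arc_counted (a : Fin (m + 3)) : IsCountedAlliance (cycleGraph (m + 3)) (arc m k a) := by
  rw [arc]
  rw [cycle_counted_image]
  set b : Fin (m + 3) := ⟨min (k - 1) (m + 2), by omega⟩ with hb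
  have hbval : b.val = k - 1 := by rw [hb]; show min (k-1) (m+2) = k-1; omega
  have hmem : ∀ x : Fin (m + 3), x ∈ Finset.Icc 0 b ↔ x.val ≤ k - 1 := by
    intro x
    rw [Finset.mem_Icc]
    constructor
    · rintro ⟨-, h2⟩; rw [Fin.le_def, hbval] at h2; exact h2
    · intro h; exact ⟨Fin.zero_le _, by rw [Fin.le_def, hbval]; exact h⟩
  constructor
  · constructor
    · exact ⟨0, (hmem 0).mpr (by rw [Fin.val_zero]; omega)⟩
    · intro v hv
      have hvk := (hmem v).mp hv
      rw [cycle_degOf]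
      have hdeg : 1 ≤ degIn (cycleGraph (m + 3)) (Finset.Icc 0 b) v := by
        by_cases hc : v.val < k - 1
        · refine degIn_pos _ _ _ ⟨v.val + 1, by omega⟩
            ((hmem _).mpr (by show v.val + 1 ≤ k - 1; omega)) ?_
          rw [cycle_adj_vals]
          right; left
          show (⟨v.val + 1, _⟩ : Fin (m+3)).val = v.val + 1
          rfl
        · have hveq : v.val = k - 1 := by omega
          refine degIn_pos _ _ _ ⟨v.val - 1, by omega⟩
            ((hmem _).mpr (by show v.val - 1 ≤ k - 1; omega)) ?_
          rw [cycle_adj_vals]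
          left
          show v.val = (⟨v.val - 1, _⟩ : Fin (m+3)).val + 1
          show v.val = v.val - 1 + 1
          omega
      omega
  · rw [cycle_induce_eq_path _ (fun x hx => by have := (hmem x).mp hx; omega)]
    exact path_icc_connected 0 b (Fin.zero_le _)

include hkn in
lemma arc_inj : Function.Injective (arc m k) := by
  intro a a' heq
  by_contra hne
  have h1 : a' ∈ arc m k a := by
    rw [heq, mem_arc hkn, sub_self]
    exact Nat.zero_le _
  rw [mem_arc hkn] at h1
  have hd0 : (a' - a).val ≠ 0 := by
    intro h
    have h2 : a' - a = 0 := Fin.ext (by rw [h, Fin.val_zero])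
    exact hne (sub_eq_zero.mp h2).symm
  have hx : a' - 1 ∈ arc m k a := by
    rw [mem_arc hkn, sub_right_comm, fin_sub_one_val _ hd0]
    omega
  rw [heq, mem_arc hkn] at hx
  have : a' - 1 - a' = -1 := by
    rw [sub_right_comm, sub_self, zero_sub]
  rw [this, fin_neg_one_val] at hx
  omega

include hk2 hkn in
lemma cycle_counted_structure (S : Finset (Fin (m + 3))) (hcard : S.card = k)
    (hcount : IsCountedAlliance (cycleGraph (m + 3)) S) : ∃ a, S = arc m k a := by
  have hcompl : (Sᶜ : Finset (Fin (m + 3))).Nonempty := by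
    rw [← Finset.card_pos, Finset.card_compl, hcard, Fintype.card_fin]
    omega
  obtain ⟨z, hz⟩ := hcompl
  have hznS : z ∉ S := by rwa [Finset.mem_compl] at hz
  set c : Fin (m + 3) := Fin.last (m + 2) - z with hc
  set T : Finset (Fin (m + 3)) := S.image (· + c) with hT
  have hTcount : IsCountedAlliance (cycleGraph (m + 3)) T := (cycle_counted_image c S).mpr hcount
  have hTcard : T.card = k := by
    rw [hT, Finset.card_image_of_injective _ (add_left_injective c), hcard]
  have hlast : Fin.last (m + 2) ∉ T := by
    rw [hT]
    intro hmem
    obtain ⟨s, hs, hseq⟩ := Finset.mem_image.mp hmem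
    have : s = Fin.last (m + 2) - c := eq_sub_of_add_eq hseq
    rw [hc, sub_sub_cancel] at this
    exact hznS (this ▸ hs)
  have hbound : ∀ x ∈ T, x.val < m + 2 := by
    intro x hxT
    have hx3 := x.2
    rcases Nat.lt_or_ge x.val (m + 2) with h | h
    · exact h
    · exfalso
      have : x = Fin.last (m + 2) := Fin.ext (by rw [Fin.val_last]; omega)
      exact hlast (this ▸ hxT)
  have hTne : T.Nonempty := hTcount.1.1
  have hTconn : ((pathGraph (m + 3)).induce (T : Set (Fin (m + 3)))).Connected := by
    rw [← cycle_induce_eq_path _ hbound]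
    exact hTcount.2
  have hTint := path_connected_interval T hTne hTconn
  set a : Fin (m + 3) := T.min' hTne with ha
  set b : Fin (m + 3) := T.max' hTne with hbb
  have hab : a ≤ b := T.min'_le _ (T.max'_mem hTne)
  have hbv : b.val = a.val + k - 1 := by
    have : T.card = b.val + 1 - a.val := by rw [hTint, Fin.card_Icc]
    rw [hTcard] at this
    have : a.val ≤ b.val := hab
    omega
  have hbm : b.val < m + 2 := hbound b (T.max'_mem hTne)
  -- T = I0.image (· + a)
  have hTarc : T = arc m k a := by
    rw [hTint]
    ext x
    rw [Finset.mem_Icc, mem_arc hkn]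
    constructor
    · rintro ⟨h1, h2⟩
      rw [Fin.le_def] at h1 h2
      rw [fin_sub_val_of_le x a h1]
      omega
    · intro h
      have hx2 := x.2
      have ha2 := a.2
      have hsum : (x - a).val + a.val < m + 3 := by omega
      have hxv : x.val = (x - a).val + a.val := by
        have h2 : (x - a + a).val = (x - a).val + a.val := fin_add_val _ _ hsum
        rw [sub_add_cancel] at h2
        omega
      exact ⟨by rw [Fin.le_def]; omega, by rw [Fin.le_def]; omega⟩
  refine ⟨a - c, ?_⟩
  have hS : S = T.image (· + (-c)) := by
    rw [hT, Finset.image_image]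
    have : ((· + (-c)) ∘ (· + c)) = id := by
      funext x
      simp [add_assoc]
    rw [this, Finset.image_id]
  rw [hS, hTarc, arc, Finset.image_image, arc]
  congr 1
  funext x
  show x + a + -c = x + (a - c)
  rw [add_assoc, sub_eq_add_neg]
end arcs

lemma cycle_aCoeff_mid {m k : ℕ} (hk2 : 2 ≤ k) (hkn : k ≤ m + 2) :
    aCoeff (cycleGraph (m + 3)) k = m + 3 := by
  classical
  rw [aCoeff]
  have hset : {S : Finset (Fin (m+3)) | S.card = k ∧ IsCountedAlliance (cycleGraph (m+3)) S}
      = ↑(Finset.univ.image (arc m k)) := by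
    ext S
    simp only [Set.mem_setOf_eq, Finset.coe_image, Finset.coe_univ, Set.image_univ,
      Set.mem_range]
    constructor
    · rintro ⟨hcard, hcount⟩
      exact (cycle_counted_structure hk2 hkn S hcard hcount).imp (fun a h => h.symm)
    · rintro ⟨a, rfl⟩
      exact ⟨arc_card hk2 hkn a, arc_counted hk2 hkn a⟩
  rw [hset, Set.ncard_coe_finset, Finset.card_image_of_injective _ (arc_inj hkn),
    Finset.card_univ, Fintype.card_fin]

lemma cycle_aCoeff_last {m : ℕ} : aCoeff (cycleGraph (m + 3)) (m + 3) ≤ 1 := by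
  rw [aCoeff]
  refine le_trans
    (Set.ncard_le_ncard (t := {(Finset.univ : Finset (Fin (m+3)))}) ?_
      (Set.finite_singleton _))
    (le_of_eq (Set.ncard_singleton _))
  rintro S ⟨hcard, -⟩
  simp only [Set.mem_singleton_iff]
  apply Finset.eq_univ_of_card
  rw [hcard, Fintype.card_fin]

lemma cycle_unimodal {m : ℕ} : UnimodalOn (aCoeff (cycleGraph (m + 3))) (m + 3) := by
  refine ⟨2, by omega, ?_, ?_⟩
  · intro i j hij hj2
    rcases Nat.lt_or_ge i 2 with hi | hi
    · interval_cases i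
      · rw [aCoeff_zero]; exact Nat.zero_le _
      · rw [aCoeff_one _ (fun v => by rw [cycle_degOf]; omega)]; exact Nat.zero_le _
    · have : i = j := by omega
      rw [this]
  · intro i j h2i hij hjn
    rcases eq_or_lt_of_le hij with rfl | hlt
    · exact le_refl _
    · have hi : i ≤ m + 2 := by omega
      rw [cycle_aCoeff_mid h2i hi]
      rcases Nat.lt_or_ge j (m + 3) with hj | hj
      · rw [cycle_aCoeff_mid (by omega) (by omega)]
      · have hjeq : j = m + 3 := by omega
        rw [hjeq]
        exact le_trans cycle_aCoeff_last (by omega)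

/-- The coefficient sequences of the strong alliance polynomials of path,
cycle and complete graphs are unimodal. -/
theorem stmt_11 :
    (∀ n : ℕ, 2 ≤ n → UnimodalOn (aCoeff (SimpleGraph.pathGraph n)) n) ∧
    (∀ n : ℕ, 3 ≤ n → UnimodalOn (aCoeff (SimpleGraph.cycleGraph n)) n) ∧
    (∀ n : ℕ, 1 ≤ n → UnimodalOn (aCoeff (⊤ : SimpleGraph (Fin n))) n) := by
  refine ⟨?_, ?_, ?_⟩
  · intro n hn
    exact path_unimodal hn
  · intro n hn
    obtain ⟨m, rfl⟩ : ∃ m, n = m + 3 := ⟨n - 3, by omega⟩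
    exact cycle_unimodal
  · intro n hn
    exact top_unimodal hn
end

section
/- For all n, m ≥ 1, the strong alliance polynomial of the complete bipartite graph satisfies a(K_{n,m}; x) = (a(K_n; x) + C(n, n/2) x^{n/2}) · (a(K_m; x) + C(m, m/2) x^{m/2}), where the term C(n, n/2) x^{n/2} is understood to be 0 when n is odd (and similarly C(m, m/2) x^{m/2} is 0 when m is odd). -/
/-!
In `K_n` a nonempty set `S` is a strong alliance iff `n < 2|S|`, and it always induces a
connected graph. In `K_{n,m}` with `n, m ≥ 1` the neighbours of a vertex are exactly the other
side, so `S` is a connected strong alliance iff it contains at least half of each side. Adding the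
`C(n, n/2)` sets with `2|S| = n` turns `a(K_n)` into the generating polynomial of the subsets of
`Fin n` with at least half of the elements, and the count for `K_{n,m}` factors as the product of
two such polynomials through `Finset (α ⊕ β) ≃ Finset α × Finset β`.
-/

open SimpleGraph Polynomial Finset

open Classical in
theorem alliancePoly_eq_sum {V : Type*} [Fintype V] (G : SimpleGraph V) :
    alliancePoly G = ∑ S : Finset V with IsCountedAlliance G S, X ^ #S := by
  have hmaps : ∀ S ∈ univ.filter (IsCountedAlliance G), #S ∈ range (Fintype.card V + 1) :=
    fun S _ => mem_range_succ_iff.mpr (card_le_univ S)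
  rw [alliancePoly, ← sum_fiberwise_of_maps_to' hmaps]
  refine sum_congr rfl fun k _ => ?_
  rw [sum_const, aCoeff, ← Set.ncard_coe_finset, filter_filter]
  simp only [coe_filter, mem_univ, true_and, and_comm, nsmul_eq_mul, map_natCast]

theorem degOf_top {V : Type*} [Fintype V] (v : V) :
    degOf (⊤ : SimpleGraph V) v = Fintype.card V - 1 := by
  rw [degOf, neighborSet_top, Set.ncard_compl, Set.ncard_singleton, Nat.card_eq_fintype_card]

theorem degIn_top {V : Type*} {S : Finset V} {v : V} (hv : v ∈ S) :
    degIn (⊤ : SimpleGraph V) S v = #S - 1 := by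
  classical
  rw [degIn, neighborSet_top, ← Set.sdiff_eq, ← coe_singleton, ← coe_sdiff,
    Set.ncard_coe_finset, card_sdiff_of_subset (singleton_subset_iff.mpr hv), card_singleton]

theorem isCountedAlliance_top_iff {V : Type*} [Fintype V] (S : Finset V) :
    IsCountedAlliance (⊤ : SimpleGraph V) S ↔ Fintype.card V < 2 * #S := by
  have hS : #S ≤ Fintype.card V := card_le_univ S
  constructor
  · rintro ⟨⟨⟨v, hv⟩, hall⟩, -⟩
    have hdeg := hall v hv
    rw [degOf_top, degIn_top hv] at hdeg
    have hpos := card_pos.mpr ⟨v, hv⟩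
    omega
  · intro h
    obtain ⟨v, hv⟩ : S.Nonempty := card_pos.mp (by omega)
    refine ⟨⟨⟨v, hv⟩, fun w hw => ?_⟩, ?_⟩
    · rw [degOf_top, degIn_top hw]
      omega
    · have : Nonempty (S : Set V) := ⟨⟨v, hv⟩⟩
      rw [induce_top]
      exact connected_top

noncomputable def atLeastHalfPoly (α : Type*) [Fintype α] : ℤ[X] :=
  ∑ A : Finset α with Fintype.card α ≤ 2 * #A, X ^ #A

theorem sum_filter_two_mul_card_eq (n : ℕ) :
    ∑ A : Finset (Fin n) with 2 * #A = n, (X : ℤ[X]) ^ #A =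
      if Even n then C ((n.choose (n / 2) : ℕ) : ℤ) * X ^ (n / 2) else 0 := by
  split_ifs with heven
  · have half : ∀ A : Finset (Fin n), 2 * #A = n ↔ #A = n / 2 := fun A => by
      obtain ⟨k, rfl⟩ := heven; omega
    simp only [half]
    rw [univ_filter_card_eq, sum_congr rfl fun A hA => by rw [(mem_powersetCard.mp hA).2],
      sum_const, card_powersetCard, card_univ, Fintype.card_fin, nsmul_eq_mul, map_natCast]
  · refine sum_eq_zero fun A hA => absurd ⟨#A, ?_⟩ heven
    have hA' := (mem_filter.mp hA).2
    omega

theorem alliancePoly_top_add_eq_atLeastHalfPoly (n : ℕ) :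
    alliancePoly (⊤ : SimpleGraph (Fin n)) +
        (if Even n then C ((n.choose (n / 2) : ℕ) : ℤ) * X ^ (n / 2) else 0) =
      atLeastHalfPoly (Fin n) := by
  rw [alliancePoly_eq_sum, ← sum_filter_two_mul_card_eq, atLeastHalfPoly, Fintype.card_fin,
    ← sum_filter_add_sum_filter_not {A : Finset (Fin n) | n ≤ 2 * #A} (n < 2 * #·)]
  simp only [isCountedAlliance_top_iff, filter_filter, Fintype.card_fin]
  congr 2 <;> ext A <;> simp only [mem_filter, mem_univ, true_and] <;> omega

section CompleteBipartite

variable {α β : Type*}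

theorem neighborSet_completeBipartiteGraph_inl (a : α) :
    (completeBipartiteGraph α β).neighborSet (Sum.inl a) = Set.range Sum.inr := by
  ext w; cases w <;> simp

theorem neighborSet_completeBipartiteGraph_inr (b : β) :
    (completeBipartiteGraph α β).neighborSet (Sum.inr b) = Set.range Sum.inl := by
  ext w; cases w <;> simp

theorem degOf_completeBipartiteGraph_inl [Fintype β] (a : α) :
    degOf (completeBipartiteGraph α β) (Sum.inl a) = Fintype.card β := by
  rw [degOf, neighborSet_completeBipartiteGraph_inl, ← Set.image_univ,
    Set.ncard_image_of_injective _ Sum.inr_injective, Set.ncard_univ, Nat.card_eq_fintype_card]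

theorem degOf_completeBipartiteGraph_inr [Fintype α] (b : β) :
    degOf (completeBipartiteGraph α β) (Sum.inr b) = Fintype.card α := by
  rw [degOf, neighborSet_completeBipartiteGraph_inr, ← Set.image_univ,
    Set.ncard_image_of_injective _ Sum.inl_injective, Set.ncard_univ, Nat.card_eq_fintype_card]

theorem degIn_completeBipartiteGraph_inl (S : Finset (α ⊕ β)) (a : α) :
    degIn (completeBipartiteGraph α β) S (Sum.inl a) = #S.toRight := by
  have : (S : Set (α ⊕ β)) ∩ Set.range Sum.inr = Sum.inr '' S.toRight := by
    ext w; cases w <;> simp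
  rw [degIn, neighborSet_completeBipartiteGraph_inl, this,
    Set.ncard_image_of_injective _ Sum.inr_injective, Set.ncard_coe_finset]

theorem degIn_completeBipartiteGraph_inr (S : Finset (α ⊕ β)) (b : β) :
    degIn (completeBipartiteGraph α β) S (Sum.inr b) = #S.toLeft := by
  have : (S : Set (α ⊕ β)) ∩ Set.range Sum.inl = Sum.inl '' S.toLeft := by
    ext w; cases w <;> simp
  rw [degIn, neighborSet_completeBipartiteGraph_inr, this,
    Set.ncard_image_of_injective _ Sum.inl_injective, Set.ncard_coe_finset]

theorem connected_induce_completeBipartiteGraph {S : Finset (α ⊕ β)} {a : α} {b : β}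
    (ha : Sum.inl a ∈ S) (hb : Sum.inr b ∈ S) :
    ((completeBipartiteGraph α β).induce (S : Set (α ⊕ β))).Connected := by
  set H := (completeBipartiteGraph α β).induce (S : Set (α ⊕ β))
  have : Nonempty (S : Set (α ⊕ β)) := ⟨⟨_, ha⟩⟩
  have hab : H.Adj ⟨_, ha⟩ ⟨_, hb⟩ := Or.inl ⟨rfl, rfl⟩
  have reach : ∀ w, H.Reachable ⟨_, ha⟩ w := by
    rintro ⟨w | w, hw⟩
    · exact hab.reachable.trans (Adj.reachable (Or.inr ⟨rfl, rfl⟩))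
    · exact Adj.reachable (Or.inl ⟨rfl, rfl⟩)
  exact ⟨fun u v => (reach u).symm.trans (reach v)⟩

variable [Fintype α] [Fintype β] [Nonempty α] [Nonempty β]

theorem isCountedAlliance_completeBipartiteGraph_iff (S : Finset (α ⊕ β)) :
    IsCountedAlliance (completeBipartiteGraph α β) S ↔
      Fintype.card α ≤ 2 * #S.toLeft ∧ Fintype.card β ≤ 2 * #S.toRight := by
  have hα : 0 < Fintype.card α := Fintype.card_pos
  have hβ : 0 < Fintype.card β := Fintype.card_pos
  constructor
  · rintro ⟨⟨⟨v, hv⟩, hall⟩, -⟩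
    have left_ok : ∀ a, Sum.inl a ∈ S → Fintype.card β ≤ 2 * #S.toRight := fun a ha => by
      simpa only [degOf_completeBipartiteGraph_inl, degIn_completeBipartiteGraph_inl]
        using hall _ ha
    have right_ok : ∀ b, Sum.inr b ∈ S → Fintype.card α ≤ 2 * #S.toLeft := fun b hb => by
      simpa only [degOf_completeBipartiteGraph_inr, degIn_completeBipartiteGraph_inr]
        using hall _ hb
    cases v with
    | inl a =>
      obtain ⟨b, hb⟩ := card_pos.mp (by have := left_ok a hv; omega : 0 < #S.toRight)
      exact ⟨right_ok b (mem_toRight.mp hb), left_ok a hv⟩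
    | inr b =>
      obtain ⟨a, ha⟩ := card_pos.mp (by have := right_ok b hv; omega : 0 < #S.toLeft)
      exact ⟨right_ok b hv, left_ok a (mem_toLeft.mp ha)⟩
  · rintro ⟨hl, hr⟩
    obtain ⟨a, ha⟩ := card_pos.mp (by omega : 0 < #S.toLeft)
    obtain ⟨b, hb⟩ := card_pos.mp (by omega : 0 < #S.toRight)
    rw [mem_toLeft] at ha
    rw [mem_toRight] at hb
    refine ⟨⟨⟨_, ha⟩, ?_⟩, connected_induce_completeBipartiteGraph ha hb⟩
    rintro (w | w) -
    · rwa [degOf_completeBipartiteGraph_inl, degIn_completeBipartiteGraph_inl]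
    · rwa [degOf_completeBipartiteGraph_inr, degIn_completeBipartiteGraph_inr]

theorem alliancePoly_completeBipartiteGraph :
    alliancePoly (completeBipartiteGraph α β) = atLeastHalfPoly α * atLeastHalfPoly β := by
  rw [alliancePoly_eq_sum, sum_filter, Fintype.sum_equiv Finset.sumEquiv.toEquiv _
    (fun p => if Fintype.card α ≤ 2 * #p.1 ∧ Fintype.card β ≤ 2 * #p.2 then
      X ^ #p.1 * X ^ #p.2 else 0) fun S => ?_, Fintype.sum_prod_type, atLeastHalfPoly,
    atLeastHalfPoly, sum_mul_sum, sum_filter]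
  · simp only [ite_and, sum_filter, sum_ite_irrel, sum_const_zero]
  · simp only [isCountedAlliance_completeBipartiteGraph_iff, ← pow_add, OrderIso.coe_toEquiv,
      sumEquiv_apply_fst, sumEquiv_apply_snd, card_toLeft_add_card_toRight]

end CompleteBipartite

/-- For `n, m ≥ 1`,
`a(K_{n,m};x) = (a(K_n;x) + C(n,n/2)x^{n/2})·(a(K_m;x) + C(m,m/2)x^{m/2})`,
where the term `C(n,n/2)x^{n/2}` is understood to be `0` when `n` is odd (and similarly
for `m`). -/
theorem stmt_13 (n m : ℕ) (hn : 1 ≤ n) (hm : 1 ≤ m) :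
    alliancePoly (completeBipartiteGraph (Fin n) (Fin m)) =
      (alliancePoly (⊤ : SimpleGraph (Fin n)) +
          (if Even n then Polynomial.C ((n.choose (n / 2) : ℕ) : ℤ) * Polynomial.X ^ (n / 2)
            else 0)) *
      (alliancePoly (⊤ : SimpleGraph (Fin m)) +
          (if Even m then Polynomial.C ((m.choose (m / 2) : ℕ) : ℤ) * Polynomial.X ^ (m / 2)
            else 0)) := by
  have : NeZero n := ⟨by omega⟩
  have : NeZero m := ⟨by omega⟩
  rw [alliancePoly_top_add_eq_atLeastHalfPoly, alliancePoly_top_add_eq_atLeastHalfPoly,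
    alliancePoly_completeBipartiteGraph]
end

section
/- Let n = 2p + 1 ≥ 3 be odd and let e be any edge of the complete graph K_n. Then a_{p+1}(K_n \ e) < C(n, p+1) = a_{p+1}(K_n); in particular a(K_n \ e; x) ≠ a(K_n; x). -/
open SimpleGraph Polynomial Finset

/-! In `K_n` with `n = 2p + 1`, every vertex of a `(p + 1)`-set has `p` of its `2p` neighbours
inside the set, so all `C(n, p + 1)` such sets are connected strong alliances. After deleting the
edge `ab`, a `(p + 1)`-set containing both `a` and `b` gives `a` only `p - 1` of its `2p - 1`
neighbours inside, so it is no longer an alliance; the two polynomials then differ in the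
coefficient of `x^(p+1)`. -/

variable {V : Type*}

section Degrees

variable {G : SimpleGraph V} {v : V} {N : Finset V}

lemma degOf_eq_card (h : G.neighborSet v = N) : degOf G v = #N := by
  rw [degOf, h, Set.ncard_coe_finset]

lemma degIn_eq_card_inter [DecidableEq V] (h : G.neighborSet v = N) (S : Finset V) :
    degIn G S v = #(S ∩ N) := by
  rw [degIn, h, ← coe_inter, Set.ncard_coe_finset]

end Degrees

variable [Fintype V]

lemma neighborSet_top_deleteEdges_left [DecidableEq V] (a b : V) :
    ((⊤ : SimpleGraph V).deleteEdges {s(a, b)}).neighborSet a = ↑({a, b}ᶜ : Finset V) := by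
  ext w
  simp only [mem_neighborSet, deleteEdges_adj, top_adj, Set.mem_singleton_iff, coe_compl,
    coe_insert, coe_singleton, Set.mem_compl_iff, Set.mem_insert_iff, Sym2.congr_right]
  tauto

lemma isCountedAlliance_top {S : Finset V} (hS : Fintype.card V < 2 * #S) :
    IsCountedAlliance ⊤ S := by
  classical
  have hne : S.Nonempty := card_pos.mp (by omega)
  have hN (v : V) : (⊤ : SimpleGraph V).neighborSet v = ↑({v}ᶜ : Finset V) := by
    simp [neighborSet_top]
  refine ⟨⟨hne, fun v hv => ?_⟩, ?_⟩
  · rw [degOf_eq_card (hN v), degIn_eq_card_inter (hN v), ← sdiff_eq_inter_compl,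
      card_compl, card_sdiff_of_subset (singleton_subset_iff.mpr hv), card_singleton]
    omega
  · have : Nonempty (S : Set V) := hne.coe_sort
    exact (induce_top (V := V) S).symm ▸ connected_top

lemma not_isStrongAlliance_top_deleteEdges {a b : V} (hab : a ≠ b) {S : Finset V}
    (ha : a ∈ S) (hb : b ∈ S) (hS : 2 * #S < Fintype.card V + 2) :
    ¬ IsStrongAlliance ((⊤ : SimpleGraph V).deleteEdges {s(a, b)}) S := by
  classical
  rintro ⟨-, hdeg⟩
  have hab_sub : {a, b} ⊆ S := insert_subset ha (singleton_subset_iff.mpr hb)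
  have h := hdeg a ha
  rw [degOf_eq_card (neighborSet_top_deleteEdges_left a b),
    degIn_eq_card_inter (neighborSet_top_deleteEdges_left a b), ← sdiff_eq_inter_compl,
    card_compl, card_sdiff_of_subset hab_sub, card_pair hab] at h
  have hcard := card_le_card hab_sub
  rw [card_pair hab] at hcard
  omega

lemma setOf_isCountedAlliance_subset_powersetCard (G : SimpleGraph V) (k : ℕ) :
    {S : Finset V | #S = k ∧ IsCountedAlliance G S} ⊆ ↑(powersetCard k (univ : Finset V)) :=
  fun S hS => by simpa using hS.1

lemma aCoeff_eq_choose {G : SimpleGraph V} {k : ℕ}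
    (hG : ∀ S : Finset V, #S = k → IsCountedAlliance G S) :
    aCoeff G k = (Fintype.card V).choose k := by
  rw [aCoeff, (setOf_isCountedAlliance_subset_powersetCard G k).antisymm
    fun S hS => ⟨by simpa using hS, hG S (by simpa using hS)⟩, Set.ncard_coe_finset,
    card_powersetCard, card_univ]

lemma aCoeff_lt_choose {G : SimpleGraph V} {k : ℕ} {S : Finset V} (hS : #S = k)
    (hG : ¬ IsCountedAlliance G S) : aCoeff G k < (Fintype.card V).choose k := by
  have hssub := (setOf_isCountedAlliance_subset_powersetCard G k).ssubset_of_not_subset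
    fun h => hG (h (by simpa using hS)).2
  simpa [aCoeff, Set.ncard_coe_finset, card_powersetCard] using Set.ncard_lt_ncard hssub

lemma coeff_alliancePoly (G : SimpleGraph V) {k : ℕ} (hk : k ≤ Fintype.card V) :
    (alliancePoly G).coeff k = aCoeff G k := by
  simp [alliancePoly, finsetSum_coeff, Nat.lt_succ_of_le hk]

/-- Let `n = 2p + 1 ≥ 3` be odd and let `e` be any edge of the complete graph
`K_n`.  Then `a_{p+1}(K_n \ e) < C(n, p+1) = a_{p+1}(K_n)`; in particular
`a(K_n \ e; x) ≠ a(K_n; x)`. -/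
theorem stmt_17 (p : ℕ) (hp : 1 ≤ p) (e : Sym2 (Fin (2 * p + 1)))
    (he : e ∈ (⊤ : SimpleGraph (Fin (2 * p + 1))).edgeSet) :
    aCoeff ((⊤ : SimpleGraph (Fin (2 * p + 1))).deleteEdges {e}) (p + 1) <
        (2 * p + 1).choose (p + 1) ∧
    aCoeff (⊤ : SimpleGraph (Fin (2 * p + 1))) (p + 1) = (2 * p + 1).choose (p + 1) ∧
    alliancePoly ((⊤ : SimpleGraph (Fin (2 * p + 1))).deleteEdges {e}) ≠
      alliancePoly (⊤ : SimpleGraph (Fin (2 * p + 1))) := by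
  induction e using Sym2.ind with
  | _ a b =>
  have hab : a ≠ b := by simpa using he
  have hV : Fintype.card (Fin (2 * p + 1)) = 2 * p + 1 := Fintype.card_fin _
  obtain ⟨S, hab_sub, -, hS⟩ := exists_subsuperset_card_eq (subset_univ {a, b}) (n := p + 1)
    (by rw [card_pair hab]; omega) (by rw [card_univ, hV]; omega)
  have hS_bad : ¬ IsStrongAlliance ((⊤ : SimpleGraph _).deleteEdges {s(a, b)}) S :=
    not_isStrongAlliance_top_deleteEdges hab (hab_sub (by simp)) (hab_sub (by simp))
      (by rw [hS, hV]; omega)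
  have hlt : aCoeff ((⊤ : SimpleGraph _).deleteEdges {s(a, b)}) (p + 1) <
      (2 * p + 1).choose (p + 1) := by
    simpa only [hV] using aCoeff_lt_choose hS fun h => hS_bad h.1
  have htop : aCoeff (⊤ : SimpleGraph (Fin (2 * p + 1))) (p + 1) =
      (2 * p + 1).choose (p + 1) := by
    have h := aCoeff_eq_choose (G := ⊤) (k := p + 1) fun (T : Finset (Fin (2 * p + 1))) hT =>
      isCountedAlliance_top (by rw [hT, hV]; omega)
    rwa [hV] at h
  refine ⟨hlt, htop, fun h => hlt.ne ?_⟩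
  have hcoeff := congrArg (coeff · (p + 1)) h
  simp only [coeff_alliancePoly _ (show p + 1 ≤ Fintype.card (Fin (2 * p + 1)) by omega),
    htop] at hcoeff
  exact_mod_cast hcoeff
end
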